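/- arXiv:2408.16687 — 2 statements merged into one kernel-verified Lean document; each statement's English description precedes it below -/
import Mathlib

section
/- Approximate closure of the Efron-Stein basis: for X a d-partite (q,γ)-product, f : X(d) → ℝ, and S ≠ T ⊆ [d], ‖(f^{=S})^{=T}‖_q ≤ 2^{O(d)} γ ‖f‖_q, while ‖(f^{=S})^{=S} − f^{=S}‖_q ≤ 2^{O(d)} γ ‖f‖_q. -/
open Finset BigOperators

/-- Conditional expectation operator `E_T` on a `d`-partite space:
`E_T f (x) = E[f(y) | y_T = x_T]` under the (finitely supported) measure `μ`. -/
noncomputable def projE {d : ℕ} {Ω : Type} [Fintype Ω] [DecidableEq Ω]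
    (μ : (Fin d → Ω) → ℝ) (T : Finset (Fin d))
    (f : (Fin d → Ω) → ℝ) (x : Fin d → Ω) : ℝ :=
  (∑ y : Fin d → Ω, if ∀ i ∈ T, y i = x i then μ y * f y else 0) /
  (∑ y : Fin d → Ω, if ∀ i ∈ T, y i = x i then μ y else 0)

/-- Efron–Stein component `f^{=S} = ∑_{T ⊆ S} (-1)^{|S|-|T|} E_T f`. -/
noncomputable def esComp {d : ℕ} {Ω : Type} [Fintype Ω] [DecidableEq Ω]
    (μ : (Fin d → Ω) → ℝ) (S : Finset (Fin d))
    (f : (Fin d → Ω) → ℝ) : (Fin d → Ω) → ℝ :=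
  fun x => ∑ T ∈ S.powerset, (-1 : ℝ) ^ (S.card - T.card) * projE μ T f x

/-- `L^q` norm with respect to the probability mass function `μ`. -/
noncomputable def pnorm {α : Type} [Fintype α] (μ : α → ℝ) (q : ℝ) (f : α → ℝ) : ℝ :=
  (∑ x, μ x * |f x| ^ q) ^ (1 / q)

/-- Conditional (link) measure obtained from `μ` by conditioning the coordinates
in `R` to agree with `z`. -/
noncomputable def condMeasure {d : ℕ} {Ω : Type} [Fintype Ω] [DecidableEq Ω]
    (μ : (Fin d → Ω) → ℝ) (R : Finset (Fin d)) (z : Fin d → Ω) :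
    (Fin d → Ω) → ℝ :=
  fun y => (if ∀ i ∈ R, y i = z i then μ y else 0) /
    (∑ y' : Fin d → Ω, if ∀ i ∈ R, y' i = z i then μ y' else 0)

/-- Expectation with respect to the mass function `μ`. -/
noncomputable def expect {α : Type} [Fintype α] (μ : α → ℝ) (f : α → ℝ) : ℝ :=
  ∑ x, μ x * f x

/-- `X` is a `(q,γ)`-product: in every link of codimension at least `2`
(conditioning the coordinates in `R` on `z`), for every pair of distinct colors
`i, j ∉ R`, the bipartite walk from color `i` to color `j` is a `q`-norm
expander: `‖A^τ_{i,j} g − Π^τ_{i,j} g‖_q ≤ γ ‖g‖_q` for every function `g` of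
the `i`-th coordinate. -/
def IsQGammaProduct {d : ℕ} {Ω : Type} [Fintype Ω] [DecidableEq Ω]
    (μ : (Fin d → Ω) → ℝ) (q γ : ℝ) : Prop :=
  ∀ (R : Finset (Fin d)) (z : Fin d → Ω), R.card + 2 ≤ d →
    ∀ i j : Fin d, i ∉ R → j ∉ R → i ≠ j →
      ∀ g : (Fin d → Ω) → ℝ, (∀ x y, x i = y i → g x = g y) →
        pnorm (condMeasure μ R z) q
            (fun x => projE (condMeasure μ R z) {j} g x - expect (condMeasure μ R z) g)
          ≤ γ * pnorm (condMeasure μ R z) q g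

/-!
Expanding both projections, `(f^{=S})^{=T}` is the alternating double sum of `E_{T'} E_U f` over
`T' ⊆ T`, `U ⊆ S`. If every `E_{T'} E_U` were `E_{T' ∩ U}`, as for a genuine product, Möbius
cancellation would leave exactly `[S = T] f^{=S}`; so it suffices to bound each defect
`‖E_A E_B f - E_{A ∩ B} f‖_q ≤ |A \ B| |B| γ ‖f‖_q`. Adding the coordinates of `A \ B` to `A ∩ B`
one at a time turns the defect into a sum of differences `E_{R ∪ {j}} g - E_R g` for the
`B`-junta `g = E_B f`. Peeling off the coordinates `i` of `g` outside `R` one at a time, each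
remaining step is, link by link (conditioning on `R` and the other coordinates of `g`), the
`q`-norm expansion of the walk from colour `i` to colour `j`, and bounds on links integrate to
global ones.
-/

namespace EfronStein

section WeightedSums

variable {α : Type} [Fintype α] {ν : α → ℝ}

theorem expect_add (f g : α → ℝ) : expect ν (fun x => f x + g x) = expect ν f + expect ν g := by
  simp only [_root_.expect, mul_add, sum_add_distrib]

theorem expect_const_mul (c : ℝ) (f : α → ℝ) : expect ν (fun x => c * f x) = c * expect ν f := by
  simp only [_root_.expect, mul_sum]
  exact sum_congr rfl fun x _ => by ring

theorem expect_sum {ι : Type*} (s : Finset ι) (F : ι → α → ℝ) :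
    expect ν (fun x => ∑ i ∈ s, F i x) = ∑ i ∈ s, expect ν (F i) := by
  simp only [_root_.expect, mul_sum]
  exact sum_comm

theorem expect_congr {f g : α → ℝ} (h : ∀ x, ν x ≠ 0 → f x = g x) : expect ν f = expect ν g := by
  refine sum_congr rfl fun x _ => ?_
  by_cases hx : ν x = 0
  · simp [hx]
  · rw [h x hx]

theorem expect_mono (hν : ∀ x, 0 ≤ ν x) {f g : α → ℝ} (h : ∀ x, ν x ≠ 0 → f x ≤ g x) :
    expect ν f ≤ expect ν g := by
  refine sum_le_sum fun x _ => ?_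
  by_cases hx : ν x = 0
  · simp [hx]
  · exact mul_le_mul_of_nonneg_left (h x hx) (hν x)

theorem expect_eq_of_forall_eq (hν1 : ∑ x, ν x = 1) {f : α → ℝ} {c : ℝ}
    (h : ∀ x, ν x ≠ 0 → f x = c) : expect ν f = c := by
  rw [expect_congr h, _root_.expect, ← sum_mul, hν1, one_mul]

theorem abs_expect_rpow_le (hν : ∀ x, 0 ≤ ν x) (hν1 : ∑ x, ν x = 1) {q : ℝ} (hq : 1 ≤ q)
    (f : α → ℝ) : |expect ν f| ^ q ≤ expect ν (fun x => |f x| ^ q) := by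
  have habs : |expect ν f| ≤ expect ν (fun x => |f x|) := by
    refine (abs_sum_le_sum_abs _ _).trans_eq (sum_congr rfl fun x _ => ?_)
    rw [abs_mul, abs_of_nonneg (hν x)]
  calc |expect ν f| ^ q ≤ expect ν (fun x => |f x|) ^ q :=
        Real.rpow_le_rpow (abs_nonneg _) habs (by linarith)
    _ ≤ expect ν (fun x => |f x| ^ q) :=
        Real.rpow_arith_mean_le_arith_mean_rpow univ ν _ (fun x _ => hν x) hν1
          (fun x _ => abs_nonneg _) hq

theorem pnorm_eq_expect_rpow (q : ℝ) (f : α → ℝ) :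
    pnorm ν q f = expect ν (fun x => |f x| ^ q) ^ (1 / q) := rfl

theorem expect_rpow_nonneg (hν : ∀ x, 0 ≤ ν x) (q : ℝ) (f : α → ℝ) :
    0 ≤ expect ν (fun x => |f x| ^ q) :=
  sum_nonneg fun x _ => mul_nonneg (hν x) (Real.rpow_nonneg (abs_nonneg _) _)

theorem pnorm_nonneg (hν : ∀ x, 0 ≤ ν x) (q : ℝ) (f : α → ℝ) : 0 ≤ pnorm ν q f :=
  Real.rpow_nonneg (expect_rpow_nonneg hν q f) _

theorem pnorm_rpow (hν : ∀ x, 0 ≤ ν x) {q : ℝ} (hq : q ≠ 0) (f : α → ℝ) :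
    pnorm ν q f ^ q = expect ν (fun x => |f x| ^ q) := by
  rw [pnorm_eq_expect_rpow, ← Real.rpow_mul (expect_rpow_nonneg hν q f), one_div_mul_cancel hq,
    Real.rpow_one]

theorem pnorm_congr {q : ℝ} {f g : α → ℝ} (h : ∀ x, ν x ≠ 0 → f x = g x) :
    pnorm ν q f = pnorm ν q g := by
  rw [pnorm_eq_expect_rpow, pnorm_eq_expect_rpow, expect_congr fun x hx => by rw [h x hx]]

theorem pnorm_zero {q : ℝ} (hq : q ≠ 0) : pnorm ν q (fun _ => 0) = 0 := by
  simp [pnorm, Real.zero_rpow hq, Real.zero_rpow (inv_ne_zero hq)]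

theorem pnorm_le_mul_of_expect_le (hν : ∀ x, 0 ≤ ν x) {q c : ℝ} (hq : 0 < q) (hc : 0 ≤ c)
    {f g : α → ℝ}
    (h : expect ν (fun x => |f x| ^ q) ≤ c ^ q * expect ν (fun x => |g x| ^ q)) :
    pnorm ν q f ≤ c * pnorm ν q g := by
  calc pnorm ν q f ≤ (c ^ q * expect ν (fun x => |g x| ^ q)) ^ (1 / q) :=
        Real.rpow_le_rpow (expect_rpow_nonneg hν q f) h (by positivity)
    _ = c * pnorm ν q g := by
        rw [Real.mul_rpow (Real.rpow_nonneg hc q) (expect_rpow_nonneg hν q g),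
          ← Real.rpow_mul hc, mul_one_div_cancel hq.ne', Real.rpow_one, pnorm_eq_expect_rpow]

theorem pnorm_const_mul (hν : ∀ x, 0 ≤ ν x) {q : ℝ} (hq : 0 < q) (c : ℝ) (f : α → ℝ) :
    pnorm ν q (fun x => c * f x) = |c| * pnorm ν q f := by
  have hexp : expect ν (fun x => |c * f x| ^ q) = |c| ^ q * expect ν (fun x => |f x| ^ q) := by
    rw [← expect_const_mul]
    exact expect_congr fun x _ => by rw [abs_mul, Real.mul_rpow (abs_nonneg c) (abs_nonneg _)]
  rw [pnorm_eq_expect_rpow, hexp, Real.mul_rpow (Real.rpow_nonneg (abs_nonneg c) q)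
    (expect_rpow_nonneg hν q f), ← Real.rpow_mul (abs_nonneg c), mul_one_div_cancel hq.ne',
    Real.rpow_one, pnorm_eq_expect_rpow]

theorem pnorm_add_le (hν : ∀ x, 0 ≤ ν x) {q : ℝ} (hq : 1 ≤ q) (f g : α → ℝ) :
    pnorm ν q (fun x => f x + g x) ≤ pnorm ν q f + pnorm ν q g := by
  have hq0 : 0 < q := by linarith
  -- Minkowski for the counting measure, applied to `ν ^ (1/q) * f` and `ν ^ (1/q) * g`
  have hweight : ∀ (h : α → ℝ) x, ν x * |h x| ^ q = |ν x ^ (1 / q) * h x| ^ q := fun h x => by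
    rw [abs_mul, abs_of_nonneg (Real.rpow_nonneg (hν x) _),
      Real.mul_rpow (Real.rpow_nonneg (hν x) _) (abs_nonneg _), ← Real.rpow_mul (hν x),
      one_div_mul_cancel hq0.ne', Real.rpow_one]
  simp only [pnorm, hweight (fun x => f x + g x), hweight f, hweight g, mul_add]
  exact Real.Lp_add_le univ _ _ hq

theorem pnorm_sum_le (hν : ∀ x, 0 ≤ ν x) {q : ℝ} (hq : 1 ≤ q) {ι : Type*} (s : Finset ι)
    (F : ι → α → ℝ) : pnorm ν q (fun x => ∑ i ∈ s, F i x) ≤ ∑ i ∈ s, pnorm ν q (F i) := by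
  classical
  induction s using Finset.induction_on with
  | empty => simp only [sum_empty, pnorm_zero (show q ≠ 0 by linarith), le_refl]
  | insert a s ha ih =>
    simp only [sum_insert ha]
    exact (pnorm_add_le hν hq _ _).trans (by linarith)

end WeightedSums

section ConditionalExpectation

variable {d : ℕ} {Ω : Type} {μ : (Fin d → Ω) → ℝ}

def IsJunta (B : Finset (Fin d)) (g : (Fin d → Ω) → ℝ) : Prop :=
  ∀ x y : Fin d → Ω, (∀ i ∈ B, x i = y i) → g x = g y

theorem IsJunta.mono {B B' : Finset (Fin d)} (hBB' : B ⊆ B') {g : (Fin d → Ω) → ℝ}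
    (hg : IsJunta B g) : IsJunta B' g :=
  fun x y hxy => hg x y fun i hi => hxy i (hBB' hi)

variable [DecidableEq Ω]

def cylMass (μ : (Fin d → Ω) → ℝ) (T : Finset (Fin d)) (x y : Fin d → Ω) : ℝ :=
  if ∀ i ∈ T, y i = x i then μ y else 0

theorem cylMass_nonneg (hμ : ∀ x, 0 ≤ μ x) (T : Finset (Fin d)) (x y : Fin d → Ω) :
    0 ≤ cylMass μ T x y := by
  unfold cylMass
  split_ifs
  exacts [hμ y, le_rfl]

theorem cylMass_empty (x : Fin d → Ω) : cylMass μ ∅ x = μ := by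
  funext y
  simp [cylMass]

theorem cylMass_congr {T : Finset (Fin d)} {x x' : Fin d → Ω} (h : ∀ i ∈ T, x i = x' i) :
    cylMass μ T x = cylMass μ T x' := by
  funext y
  have hiff : (∀ i ∈ T, y i = x i) ↔ ∀ i ∈ T, y i = x' i :=
    forall₂_congr fun i hi => by rw [h i hi]
  simp only [cylMass, hiff]

variable [Fintype Ω]

theorem le_sum_cylMass (hμ : ∀ x, 0 ≤ μ x) (T : Finset (Fin d)) (x : Fin d → Ω) :
    μ x ≤ ∑ y, cylMass μ T x y := by
  have hself : cylMass μ T x x = μ x := by simp [cylMass]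
  exact hself ▸ single_le_sum (fun y _ => cylMass_nonneg hμ T x y) (mem_univ x)

theorem condMeasure_eq_cylMass_div (T : Finset (Fin d)) (x y : Fin d → Ω) :
    condMeasure μ T x y = cylMass μ T x y / ∑ y', cylMass μ T x y' := rfl

theorem condMeasure_nonneg (hμ : ∀ x, 0 ≤ μ x) (T : Finset (Fin d)) (x y : Fin d → Ω) :
    0 ≤ condMeasure μ T x y :=
  div_nonneg (cylMass_nonneg hμ T x y) (sum_nonneg fun y' _ => cylMass_nonneg hμ T x y')

theorem sum_condMeasure (hμ : ∀ x, 0 ≤ μ x) (T : Finset (Fin d)) {x : Fin d → Ω}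
    (hx : μ x ≠ 0) : ∑ y, condMeasure μ T x y = 1 := by
  simp only [condMeasure_eq_cylMass_div, ← sum_div]
  exact div_self ((lt_of_le_of_ne (hμ x) hx.symm).trans_le (le_sum_cylMass hμ T x)).ne'

theorem condMeasure_congr {T : Finset (Fin d)} {x x' : Fin d → Ω} (h : ∀ i ∈ T, x i = x' i) :
    condMeasure μ T x = condMeasure μ T x' := by
  funext y
  simp only [condMeasure_eq_cylMass_div, cylMass_congr h]

theorem condMeasure_of_not_agree {T : Finset (Fin d)} {x y : Fin d → Ω}
    (h : ¬ ∀ i ∈ T, y i = x i) : condMeasure μ T x y = 0 := by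
  simp [condMeasure, h]

theorem agree_of_condMeasure_ne_zero {T : Finset (Fin d)} {x y : Fin d → Ω}
    (h : condMeasure μ T x y ≠ 0) : ∀ i ∈ T, y i = x i :=
  not_not.1 fun hxy => h (condMeasure_of_not_agree hxy)

theorem ne_zero_of_condMeasure_ne_zero {T : Finset (Fin d)} {x y : Fin d → Ω}
    (h : condMeasure μ T x y ≠ 0) : μ y ≠ 0 := by
  intro hy
  simp [condMeasure, hy] at h

theorem projE_eq_expect (T : Finset (Fin d)) (f : (Fin d → Ω) → ℝ) (x : Fin d → Ω) :
    projE μ T f x = expect (condMeasure μ T x) f := by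
  simp only [projE, _root_.expect, condMeasure, sum_div]
  refine sum_congr rfl fun y _ => ?_
  split_ifs <;> ring

theorem projE_eq_cylMass (T : Finset (Fin d)) (f : (Fin d → Ω) → ℝ) (x : Fin d → Ω) :
    projE μ T f x = (∑ y, cylMass μ T x y * f y) / ∑ y, cylMass μ T x y := by
  simp only [projE, cylMass, ite_mul, zero_mul]

theorem projE_congr (T : Finset (Fin d)) (f : (Fin d → Ω) → ℝ) {x x' : Fin d → Ω}
    (h : ∀ i ∈ T, x i = x' i) : projE μ T f x = projE μ T f x' := by
  rw [projE_eq_expect, projE_eq_expect, condMeasure_congr h]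

theorem isJunta_projE (T : Finset (Fin d)) (f : (Fin d → Ω) → ℝ) : IsJunta T (projE μ T f) :=
  fun _ _ => projE_congr T f

theorem projE_congr_fun (T : Finset (Fin d)) {f g : (Fin d → Ω) → ℝ}
    (h : ∀ y, μ y ≠ 0 → f y = g y) (x : Fin d → Ω) : projE μ T f x = projE μ T g x := by
  simp only [projE_eq_expect]
  exact expect_congr fun y hy => h y (ne_zero_of_condMeasure_ne_zero hy)

theorem projE_add (T : Finset (Fin d)) (f g : (Fin d → Ω) → ℝ) (x : Fin d → Ω) :
    projE μ T (fun y => f y + g y) x = projE μ T f x + projE μ T g x := by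
  simp only [projE_eq_expect, expect_add]

theorem projE_const_mul (T : Finset (Fin d)) (c : ℝ) (f : (Fin d → Ω) → ℝ) (x : Fin d → Ω) :
    projE μ T (fun y => c * f y) x = c * projE μ T f x := by
  simp only [projE_eq_expect, expect_const_mul]

theorem projE_sum {ι : Type*} (s : Finset ι) (T : Finset (Fin d)) (F : ι → (Fin d → Ω) → ℝ)
    (x : Fin d → Ω) : projE μ T (fun y => ∑ i ∈ s, F i y) x = ∑ i ∈ s, projE μ T (F i) x := by
  simp only [projE_eq_expect, expect_sum]

theorem projE_of_isJunta (hμ : ∀ x, 0 ≤ μ x) {B : Finset (Fin d)} {g : (Fin d → Ω) → ℝ}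
    (hg : IsJunta B g) {x : Fin d → Ω} (hx : μ x ≠ 0) : projE μ B g x = g x := by
  rw [projE_eq_expect]
  exact expect_eq_of_forall_eq (sum_condMeasure hμ B hx)
    fun y hy => hg y x (agree_of_condMeasure_ne_zero hy)

/-- Reversibility of the walk "resample outside `B`" with respect to `μ` restricted to a
cylinder over `A ⊆ B`. -/
theorem cylMass_mul_condMeasure_comm {A B : Finset (Fin d)} (hAB : A ⊆ B) (x y w : Fin d → Ω) :
    cylMass μ A x y * condMeasure μ B y w = cylMass μ A x w * condMeasure μ B w y := by
  by_cases hwy : ∀ i ∈ B, w i = y i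
  · have hyw : ∀ i ∈ B, y i = w i := fun i hi => (hwy i hi).symm
    have hA : (∀ i ∈ A, y i = x i) ↔ ∀ i ∈ A, w i = x i :=
      forall₂_congr fun i hi => by rw [hwy i (hAB hi)]
    rw [condMeasure_congr hyw]
    simp only [condMeasure_eq_cylMass_div, cylMass, hA, implies_true, if_true]
    split_ifs <;> ring
  · rw [condMeasure_of_not_agree hwy,
      condMeasure_of_not_agree fun hyw => hwy fun i hi => (hyw i hi).symm, mul_zero, mul_zero]

theorem sum_cylMass_mul_projE (hμ : ∀ x, 0 ≤ μ x) {A B : Finset (Fin d)} (hAB : A ⊆ B)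
    (f : (Fin d → Ω) → ℝ) (x : Fin d → Ω) :
    ∑ y, cylMass μ A x y * projE μ B f y = ∑ y, cylMass μ A x y * f y := by
  calc ∑ y, cylMass μ A x y * projE μ B f y
      = ∑ w, ∑ y, cylMass μ A x y * condMeasure μ B y w * f w := by
        simp only [projE_eq_expect, _root_.expect, mul_sum, mul_assoc]
        exact sum_comm
    _ = ∑ w, cylMass μ A x w * f w * ∑ y, condMeasure μ B w y := by
        simp only [cylMass_mul_condMeasure_comm hAB, mul_sum]
        exact sum_congr rfl fun w _ => sum_congr rfl fun y _ => by ring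
    _ = ∑ w, cylMass μ A x w * f w := by
        refine sum_congr rfl fun w _ => ?_
        by_cases hw : μ w = 0
        · simp [cylMass, hw]
        · rw [sum_condMeasure hμ B hw, mul_one]

theorem projE_projE_of_subset (hμ : ∀ x, 0 ≤ μ x) {A B : Finset (Fin d)} (hAB : A ⊆ B)
    (f : (Fin d → Ω) → ℝ) (x : Fin d → Ω) : projE μ A (projE μ B f) x = projE μ A f x := by
  rw [projE_eq_cylMass, projE_eq_cylMass, sum_cylMass_mul_projE hμ hAB]

theorem expect_projE (hμ : ∀ x, 0 ≤ μ x) (B : Finset (Fin d)) (f : (Fin d → Ω) → ℝ) :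
    expect μ (projE μ B f) = expect μ f := by
  rcases isEmpty_or_nonempty (Fin d → Ω) with hempty | ⟨⟨x⟩⟩
  · simp [_root_.expect, univ_eq_empty]
  · simpa only [_root_.expect, cylMass_empty] using sum_cylMass_mul_projE hμ (empty_subset B) f x

theorem pnorm_projE_le (hμ : ∀ x, 0 ≤ μ x) {q : ℝ} (hq : 1 ≤ q) (T : Finset (Fin d))
    (f : (Fin d → Ω) → ℝ) : pnorm μ q (projE μ T f) ≤ pnorm μ q f := by
  have jensen : ∀ x, μ x ≠ 0 → |projE μ T f x| ^ q ≤ projE μ T (fun y => |f y| ^ q) x :=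
    fun x hx => by
      simpa only [projE_eq_expect] using
        abs_expect_rpow_le (condMeasure_nonneg hμ T x) (sum_condMeasure hμ T hx) hq f
  have h := (expect_mono hμ jensen).trans_eq (expect_projE hμ T _)
  simpa using pnorm_le_mul_of_expect_le hμ (by linarith) zero_le_one
    (h.trans_eq (by rw [Real.one_rpow, one_mul]))

end ConditionalExpectation

section Links

variable {d : ℕ} {Ω : Type} [DecidableEq Ω] [Fintype Ω] {μ : (Fin d → Ω) → ℝ}

theorem cylMass_condMeasure_singleton {W : Finset (Fin d)} {j : Fin d} {x z : Fin d → Ω}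
    (hxz : ∀ i ∈ W, x i = z i) (y : Fin d → Ω) :
    cylMass (condMeasure μ W z) {j} x y = cylMass μ (insert j W) x y / ∑ y', cylMass μ W z y' := by
  have hW : (∀ i ∈ W, y i = x i) ↔ ∀ i ∈ W, y i = z i :=
    forall₂_congr fun i hi => by rw [hxz i hi]
  simp only [cylMass, condMeasure, forall_mem_insert, mem_singleton, forall_eq, hW]
  split_ifs <;> simp_all

theorem condMeasure_condMeasure_singleton (hμ : ∀ x, 0 ≤ μ x) {W : Finset (Fin d)} {j : Fin d}
    {x z : Fin d → Ω} (hxz : ∀ i ∈ W, x i = z i) (hx : μ x ≠ 0) :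
    condMeasure (condMeasure μ W z) {j} x = condMeasure μ (insert j W) x := by
  have hz : ∑ y, cylMass μ W z y ≠ 0 := by
    rw [← cylMass_congr hxz]
    exact ((lt_of_le_of_ne (hμ x) hx.symm).trans_le (le_sum_cylMass hμ W x)).ne'
  funext y
  simp only [condMeasure_eq_cylMass_div (μ := condMeasure μ W z),
    cylMass_condMeasure_singleton hxz, ← sum_div]
  exact div_div_div_cancel_right₀ hz _ _

theorem pnorm_le_of_forall_condMeasure (hμ : ∀ x, 0 ≤ μ x) {q c : ℝ} (hq : 0 < q) (hc : 0 ≤ c)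
    (W : Finset (Fin d)) {f g : (Fin d → Ω) → ℝ}
    (h : ∀ z, pnorm (condMeasure μ W z) q f ≤ c * pnorm (condMeasure μ W z) q g) :
    pnorm μ q f ≤ c * pnorm μ q g := by
  have hrpow : ∀ (k : (Fin d → Ω) → ℝ) z,
      pnorm (condMeasure μ W z) q k ^ q = projE μ W (fun y => |k y| ^ q) z := fun k z => by
    rw [pnorm_rpow (condMeasure_nonneg hμ W z) hq.ne', projE_eq_expect]
  refine pnorm_le_mul_of_expect_le hμ hq hc ?_
  calc expect μ (fun x => |f x| ^ q) = expect μ (projE μ W (fun y => |f y| ^ q)) :=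
        (expect_projE hμ W _).symm
    _ ≤ expect μ (fun z => c ^ q * projE μ W (fun y => |g y| ^ q) z) := by
        refine expect_mono hμ fun z _ => ?_
        rw [← hrpow, ← hrpow, ← Real.mul_rpow hc (pnorm_nonneg (condMeasure_nonneg hμ W z) q g)]
        exact Real.rpow_le_rpow (pnorm_nonneg (condMeasure_nonneg hμ W z) q f) (h z) hq.le
    _ = c ^ q * expect μ (fun x => |g x| ^ q) := by rw [expect_const_mul, expect_projE hμ]

theorem pnorm_condMeasure_projE_insert_sub_le (hμ : ∀ x, 0 ≤ μ x) {q γ : ℝ}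
    (hprod : IsQGammaProduct μ q γ) {W : Finset (Fin d)} {i j : Fin d} (hWd : W.card + 2 ≤ d)
    (hiW : i ∉ W) (hjW : j ∉ W) (hij : i ≠ j) {g : (Fin d → Ω) → ℝ}
    (hg : IsJunta (insert i W) g) (z : Fin d → Ω) :
    pnorm (condMeasure μ W z) q (fun x => projE μ (insert j W) g x - projE μ W g x)
      ≤ γ * pnorm (condMeasure μ W z) q g := by
  set ν := condMeasure μ W z
  -- inside the link of `z`, `g` only depends on the `i`-th coordinate
  set gz : (Fin d → Ω) → ℝ := fun x => g (Function.update z i (x i))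
  have hgz : ∀ x, ν x ≠ 0 → gz x = g x := by
    intro x hx
    refine hg _ _ fun b hb => ?_
    rcases mem_insert.1 hb with rfl | hbW
    · simp
    · rw [Function.update_of_ne (ne_of_mem_of_not_mem hbW hiW),
        agree_of_condMeasure_ne_zero hx b hbW]
  have hlink : ∀ x, ν x ≠ 0 →
      projE ν {j} gz x - expect ν gz = projE μ (insert j W) g x - projE μ W g x := by
    intro x hx
    have hxz := agree_of_condMeasure_ne_zero hx
    rw [projE_congr_fun {j} hgz, expect_congr hgz, projE_eq_expect,
      condMeasure_condMeasure_singleton hμ hxz (ne_zero_of_condMeasure_ne_zero hx),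
      ← projE_eq_expect, ← projE_eq_expect, projE_congr W g hxz]
  rw [← pnorm_congr hlink, ← pnorm_congr hgz]
  exact hprod W z hWd i j hiW hjW hij gz fun x y hxy => by simp only [gz, hxy]

theorem pnorm_projE_insert_sub_le (hμ : ∀ x, 0 ≤ μ x) {q γ : ℝ} (hq : 0 < q)
    (hγ : 0 ≤ γ) (hprod : IsQGammaProduct μ q γ) {W : Finset (Fin d)} {i j : Fin d}
    (hiW : i ∉ W) (hjW : j ∉ W) (hij : i ≠ j) {g : (Fin d → Ω) → ℝ}
    (hg : IsJunta (insert i W) g) :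
    pnorm μ q (fun x => projE μ (insert j W) g x - projE μ W g x) ≤ γ * pnorm μ q g := by
  have hWd : W.card + 2 ≤ d := by
    have hcard : (insert i (insert j W)).card = W.card + 2 := by
      rw [card_insert_of_notMem (by simp [hij, hiW]), card_insert_of_notMem hjW]
    simpa [hcard] using card_le_univ (insert i (insert j W))
  exact pnorm_le_of_forall_condMeasure hμ hq hγ W
    (pnorm_condMeasure_projE_insert_sub_le hμ hprod hWd hiW hjW hij hg)

end Links

section Commutation

variable {d : ℕ} {Ω : Type} [DecidableEq Ω] [Fintype Ω] {μ : (Fin d → Ω) → ℝ}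

theorem projE_insert_sub_eq (hμ : ∀ x, 0 ≤ μ x) {R W : Finset (Fin d)} (hRW : R ⊆ W) (j : Fin d)
    (g : (Fin d → Ω) → ℝ) (x : Fin d → Ω) :
    projE μ (insert j R) g x - projE μ R g x
      = (projE μ (insert j R) (projE μ W g) x - projE μ R (projE μ W g) x)
        + projE μ (insert j R) (fun y => projE μ (insert j W) g y - projE μ W g y) x := by
  have hadd := projE_add (μ := μ) (insert j R) (projE μ W g)
    (fun y => projE μ (insert j W) g y - projE μ W g y) x
  simp only [add_sub_cancel] at hadd
  linarith [projE_projE_of_subset hμ (insert_subset_insert j hRW) g x,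
    projE_projE_of_subset hμ hRW g x]

theorem pnorm_projE_insert_sub_le_of_isJunta (hμ : ∀ x, 0 ≤ μ x) {q γ : ℝ} (hq : 1 ≤ q)
    (hγ : 0 ≤ γ) (hprod : IsQGammaProduct μ q γ) {R D : Finset (Fin d)} (hRD : Disjoint R D)
    {j : Fin d} (hjR : j ∉ R) (hjD : j ∉ D) {g : (Fin d → Ω) → ℝ} (hg : IsJunta (R ∪ D) g) :
    pnorm μ q (fun x => projE μ (insert j R) g x - projE μ R g x)
      ≤ D.card * γ * pnorm μ q g := by
  induction D using Finset.induction_on generalizing g with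
  | empty =>
    rw [union_empty] at hg
    have hzero : pnorm μ q (fun x => projE μ (insert j R) g x - projE μ R g x) = 0 := by
      rw [← pnorm_zero (ν := μ) (q := q) (by linarith)]
      refine pnorm_congr fun x hx => ?_
      rw [projE_of_isJunta hμ (hg.mono (subset_insert j R)) hx, projE_of_isJunta hμ hg hx,
        sub_self]
    simp [hzero]
  | insert i D hiD ih =>
    obtain ⟨hiR, hRD⟩ := disjoint_insert_right.1 hRD
    have hji : j ≠ i := fun h => hjD (h ▸ mem_insert_self i D)
    have hjD : j ∉ D := fun h => hjD (mem_insert_of_mem h)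
    set W := R ∪ D
    have hiW : i ∉ W := by simp [W, hiR, hiD]
    have hjW : j ∉ W := by simp [W, hjR, hjD]
    have hstep : pnorm μ q (fun x => projE μ (insert j W) g x - projE μ W g x)
        ≤ γ * pnorm μ q g :=
      pnorm_projE_insert_sub_le hμ (by linarith) hγ hprod hiW hjW hji.symm
        (by rwa [union_insert] at hg)
    have hcontr := pnorm_projE_le hμ hq W g
    calc pnorm μ q (fun x => projE μ (insert j R) g x - projE μ R g x)
        = pnorm μ q (fun x =>
            (projE μ (insert j R) (projE μ W g) x - projE μ R (projE μ W g) x)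
              + projE μ (insert j R) (fun y => projE μ (insert j W) g y - projE μ W g y) x) :=
          pnorm_congr fun x _ => projE_insert_sub_eq hμ subset_union_left j g x
      _ ≤ D.card * γ * pnorm μ q (projE μ W g) + γ * pnorm μ q g :=
          (pnorm_add_le hμ hq _ _).trans (add_le_add (ih hRD hjD (isJunta_projE W g))
            ((pnorm_projE_le hμ hq _ _).trans hstep))
      _ ≤ D.card * γ * pnorm μ q g + γ * pnorm μ q g := by gcongr
      _ = (insert i D).card * γ * pnorm μ q g := by
          rw [card_insert_of_notMem hiD]
          push_cast
          ring

theorem pnorm_projE_union_projE_sub_le (hμ : ∀ x, 0 ≤ μ x) {q γ : ℝ} (hq : 1 ≤ q)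
    (hγ : 0 ≤ γ) (hprod : IsQGammaProduct μ q γ) {B C D : Finset (Fin d)} (hCB : C ⊆ B)
    (hBD : Disjoint B D) (f : (Fin d → Ω) → ℝ) :
    pnorm μ q (fun x => projE μ (C ∪ D) (projE μ B f) x - projE μ C f x)
      ≤ D.card * B.card * γ * pnorm μ q f := by
  induction D using Finset.induction_on with
  | empty =>
    have hzero : pnorm μ q (fun x => projE μ C (projE μ B f) x - projE μ C f x) = 0 := by
      rw [← pnorm_zero (ν := μ) (q := q) (by linarith)]
      exact pnorm_congr fun x _ => by rw [projE_projE_of_subset hμ hCB, sub_self]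
    simp [hzero]
  | insert j D hjD ih =>
    obtain ⟨hjB, hBD⟩ := disjoint_insert_right.1 hBD
    set R := C ∪ D
    have hjC : j ∉ C := fun h => hjB (hCB h)
    have hjR : j ∉ R := by simp [R, hjC, hjD]
    have hjunta : IsJunta (R ∪ B \ R) (projE μ B f) := by
      rw [union_sdiff_self_eq_union]
      exact (isJunta_projE B f).mono subset_union_right
    have hcomm := pnorm_projE_insert_sub_le_of_isJunta hμ hq hγ hprod disjoint_sdiff hjR
      (fun h => hjB (mem_sdiff.1 h).1) hjunta
    have hcard : ((B \ R).card : ℝ) ≤ B.card := by exact_mod_cast card_le_card sdiff_subset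
    have hcontr := pnorm_projE_le hμ hq B f
    calc pnorm μ q (fun x => projE μ (C ∪ insert j D) (projE μ B f) x - projE μ C f x)
        = pnorm μ q (fun x =>
            (projE μ (insert j R) (projE μ B f) x - projE μ R (projE μ B f) x)
              + (projE μ R (projE μ B f) x - projE μ C f x)) :=
          pnorm_congr fun x _ => by rw [union_insert]; ring
      _ ≤ (B \ R).card * γ * pnorm μ q (projE μ B f) + D.card * B.card * γ * pnorm μ q f :=
          (pnorm_add_le hμ hq _ _).trans (add_le_add hcomm (ih hBD))
      _ ≤ B.card * γ * pnorm μ q f + D.card * B.card * γ * pnorm μ q f := by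
          gcongr
          exact pnorm_nonneg hμ q _
      _ = (insert j D).card * B.card * γ * pnorm μ q f := by
          rw [card_insert_of_notMem hjD]
          push_cast
          ring

theorem pnorm_projE_projE_sub_le (hμ : ∀ x, 0 ≤ μ x) {q γ : ℝ} (hq : 1 ≤ q) (hγ : 0 ≤ γ)
    (hprod : IsQGammaProduct μ q γ) (A B : Finset (Fin d)) (f : (Fin d → Ω) → ℝ) :
    pnorm μ q (fun x => projE μ A (projE μ B f) x - projE μ (A ∩ B) f x)
      ≤ (A \ B).card * B.card * γ * pnorm μ q f := by
  have h := pnorm_projE_union_projE_sub_le hμ hq hγ hprod (C := A ∩ B) inter_subset_right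
    (disjoint_sdiff : Disjoint B (A \ B)) f
  rwa [union_comm, sdiff_union_inter] at h

end Commutation

section AlternatingSums

variable {β R : Type*} [DecidableEq β] [CommRing R]

theorem sum_powerset_neg_one_pow_mul_eq_zero {S : Finset β} {a : β} (ha : a ∈ S)
    {G : Finset β → R} (hG : ∀ U, G (insert a U) = G U) :
    ∑ U ∈ S.powerset, (-1 : R) ^ (S.card - U.card) * G U = 0 := by
  rw [← insert_erase ha, sum_powerset_insert (notMem_erase a S), ← sum_add_distrib]
  refine sum_eq_zero fun U hU => ?_
  have hU : U ⊆ S.erase a := mem_powerset.1 hU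
  have haU : a ∉ U := fun h => notMem_erase a S (hU h)
  rw [card_insert_of_notMem (notMem_erase a S), card_insert_of_notMem haU, hG,
    Nat.add_sub_add_right, Nat.sub_add_comm (card_le_card hU), pow_succ]
  ring

theorem sum_powerset_neg_one_pow_mul_inter (S V : Finset β) (h : Finset β → R) :
    ∑ U ∈ S.powerset, (-1 : R) ^ (S.card - U.card) * h (V ∩ U)
      = if S ⊆ V then ∑ U ∈ S.powerset, (-1 : R) ^ (S.card - U.card) * h U else 0 := by
  split_ifs with hSV
  · refine sum_congr rfl fun U hU => ?_
    rw [inter_eq_right.2 ((mem_powerset.1 hU).trans hSV)]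
  · obtain ⟨a, haS, haV⟩ := not_subset.1 hSV
    exact sum_powerset_neg_one_pow_mul_eq_zero haS fun U => by rw [inter_insert_of_notMem haV]

theorem sum_powerset_neg_one_pow_mul_ite_subset (S T : Finset β) (c : R) :
    ∑ U ∈ S.powerset, (-1 : R) ^ (S.card - U.card) * (if T ⊆ U then c else 0)
      = if S = T then c else 0 := by
  by_cases hTS : T ⊆ S
  · rcases eq_or_ne S T with rfl | hST
    · rw [sum_eq_single_of_mem S (mem_powerset_self S) fun U hU hUS => ?_]
      · simp
      · rw [if_neg fun hSU => hUS (subset_antisymm (mem_powerset.1 hU) hSU), mul_zero]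
    · obtain ⟨a, haS, haT⟩ := not_subset.1 fun h => hST (subset_antisymm h hTS)
      rw [if_neg hST]
      exact sum_powerset_neg_one_pow_mul_eq_zero haS fun U => by
        simp only [subset_insert_iff_of_notMem haT]
  · rw [if_neg fun h : S = T => hTS h.symm.subset]
    exact sum_eq_zero fun U hU => by
      rw [if_neg fun hTU => hTS (hTU.trans (mem_powerset.1 hU)), mul_zero]

end AlternatingSums

section Decomposition

variable {d : ℕ} {Ω : Type} [DecidableEq Ω] [Fintype Ω] {μ : (Fin d → Ω) → ℝ}

/-- Each summand vanishes for a product measure, where `E_{T'} E_U = E_{T' ∩ U}`. -/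
noncomputable def esDefect (μ : (Fin d → Ω) → ℝ) (S T : Finset (Fin d)) (f : (Fin d → Ω) → ℝ)
    (x : Fin d → Ω) : ℝ :=
  ∑ T' ∈ T.powerset, ∑ U ∈ S.powerset, (-1 : ℝ) ^ (T.card - T'.card) * (-1 : ℝ) ^ (S.card - U.card)
    * (projE μ T' (projE μ U f) x - projE μ (T' ∩ U) f x)

theorem esComp_esComp (S T : Finset (Fin d)) (f : (Fin d → Ω) → ℝ) (x : Fin d → Ω) :
    esComp μ T (esComp μ S f) x = (if S = T then esComp μ S f x else 0) + esDefect μ S T f x := by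
  have hexpand : esComp μ T (esComp μ S f) x = ∑ T' ∈ T.powerset, (-1 : ℝ) ^ (T.card - T'.card)
      * ∑ U ∈ S.powerset, (-1 : ℝ) ^ (S.card - U.card) * projE μ T' (projE μ U f) x := by
    unfold esComp
    simp only [projE_sum, projE_const_mul]
  have hinner : ∀ T', ∑ U ∈ S.powerset, (-1 : ℝ) ^ (S.card - U.card) * projE μ (T' ∩ U) f x
      = if S ⊆ T' then esComp μ S f x else 0 :=
    fun T' => sum_powerset_neg_one_pow_mul_inter S T' (fun V => projE μ V f x)
  have hexact : ∑ T' ∈ T.powerset, (-1 : ℝ) ^ (T.card - T'.card)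
      * ∑ U ∈ S.powerset, (-1 : ℝ) ^ (S.card - U.card) * projE μ (T' ∩ U) f x
      = if S = T then esComp μ S f x else 0 := by
    simp only [hinner, sum_powerset_neg_one_pow_mul_ite_subset, eq_comm]
  rw [hexpand, ← hexact, esDefect, ← sum_add_distrib]
  refine sum_congr rfl fun T' _ => ?_
  rw [mul_sum, mul_sum, ← sum_add_distrib]
  exact sum_congr rfl fun U _ => by ring

theorem pnorm_esDefect_le (hμ : ∀ x, 0 ≤ μ x) {q γ : ℝ} (hq : 1 ≤ q) (hγ : 0 ≤ γ)
    (hprod : IsQGammaProduct μ q γ) (S T : Finset (Fin d)) (f : (Fin d → Ω) → ℝ) :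
    pnorm μ q (esDefect μ S T f)
      ≤ 2 ^ T.card * 2 ^ S.card * (T.card * S.card) * γ * pnorm μ q f := by
  have hterm : ∀ T' ∈ T.powerset, ∀ U ∈ S.powerset,
      pnorm μ q (fun x => (-1 : ℝ) ^ (T.card - T'.card) * (-1 : ℝ) ^ (S.card - U.card)
        * (projE μ T' (projE μ U f) x - projE μ (T' ∩ U) f x))
      ≤ T.card * S.card * γ * pnorm μ q f := by
    intro T' hT' U hU
    rw [pnorm_const_mul hμ (by linarith)]
    simp only [abs_mul, abs_pow, abs_neg, abs_one, one_pow, one_mul]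
    refine (pnorm_projE_projE_sub_le hμ hq hγ hprod T' U f).trans ?_
    have hP := pnorm_nonneg hμ q f
    gcongr ?_ * ?_ * _ * _
    · exact_mod_cast (card_le_card sdiff_subset).trans (card_le_card (mem_powerset.1 hT'))
    · exact_mod_cast card_le_card (mem_powerset.1 hU)
  calc pnorm μ q (esDefect μ S T f)
      ≤ ∑ T' ∈ T.powerset, ∑ U ∈ S.powerset,
          pnorm μ q (fun x => (-1 : ℝ) ^ (T.card - T'.card) * (-1 : ℝ) ^ (S.card - U.card)
            * (projE μ T' (projE μ U f) x - projE μ (T' ∩ U) f x)) :=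
        (pnorm_sum_le hμ hq _ _).trans (sum_le_sum fun T' _ => pnorm_sum_le hμ hq _ _)
    _ ≤ ∑ T' ∈ T.powerset, ∑ U ∈ S.powerset, (T.card * S.card * γ * pnorm μ q f : ℝ) :=
        sum_le_sum fun T' hT' => sum_le_sum fun U hU => hterm T' hT' U hU
    _ = 2 ^ T.card * 2 ^ S.card * (T.card * S.card) * γ * pnorm μ q f := by
        simp only [sum_const, card_powerset, nsmul_eq_mul]
        push_cast
        ring

end Decomposition

theorem two_pow_mul_two_pow_mul_le {m n d : ℕ} (hm : m ≤ d) (hn : n ≤ d) :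
    (2 : ℝ) ^ m * 2 ^ n * (m * n) ≤ 2 ^ ((4 : ℝ) * d) := by
  have hd : d ≤ 2 ^ d := d.lt_two_pow_self.le
  have hnat : 2 ^ m * 2 ^ n * (m * n) ≤ 2 ^ (4 * d) :=
    calc 2 ^ m * 2 ^ n * (m * n) ≤ 2 ^ d * 2 ^ d * (2 ^ d * 2 ^ d) := by
          gcongr
          · norm_num
          · norm_num
          · exact hm.trans hd
          · exact hn.trans hd
      _ = 2 ^ (4 * d) := by ring
  rw [show (4 : ℝ) * d = ((4 * d : ℕ) : ℝ) by push_cast; ring, Real.rpow_natCast]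
  exact_mod_cast hnat

end EfronStein

/-- approximate closure of the Efron–Stein basis. There is a
universal constant `C` such that on any `(q,γ)`-product:
for `S ≠ T`, `‖(f^{=S})^{=T}‖_q ≤ 2^{C·d} γ ‖f‖_q`, while
`‖(f^{=S})^{=S} − f^{=S}‖_q ≤ 2^{C·d} γ ‖f‖_q`. -/
theorem es_basis_approximately_closed :
    ∃ C : ℝ, 0 < C ∧
      ∀ (d : ℕ) (Ω : Type) [Fintype Ω] [DecidableEq Ω]
        (μ : (Fin d → Ω) → ℝ), (∀ x, 0 ≤ μ x) → (∑ x, μ x = 1) →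
        ∀ q γ : ℝ, 1 < q → 0 ≤ γ → IsQGammaProduct μ q γ →
        ∀ (f : (Fin d → Ω) → ℝ) (S T : Finset (Fin d)),
          (S ≠ T →
            pnorm μ q (esComp μ T (esComp μ S f)) ≤ 2 ^ (C * d) * γ * pnorm μ q f)
          ∧ pnorm μ q (fun x => esComp μ S (esComp μ S f) x - esComp μ S f x)
              ≤ 2 ^ (C * d) * γ * pnorm μ q f := by
  refine ⟨4, by norm_num, ?_⟩
  intro d Ω _ _ μ hμ _ q γ hq hγ hprod f S T
  have hdefect : ∀ S T : Finset (Fin d),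
      pnorm μ q (EfronStein.esDefect μ S T f) ≤ 2 ^ ((4 : ℝ) * d) * γ * pnorm μ q f := by
    intro S T
    have hcard : ∀ U : Finset (Fin d), U.card ≤ d := fun U => by
      simpa using card_le_univ U
    refine (EfronStein.pnorm_esDefect_le hμ hq.le hγ hprod S T f).trans ?_
    gcongr
    · exact EfronStein.pnorm_nonneg hμ q f
    · exact EfronStein.two_pow_mul_two_pow_mul_le (hcard T) (hcard S)
  constructor
  · intro hST
    have hsplit : esComp μ T (esComp μ S f) = EfronStein.esDefect μ S T f :=
      funext fun x => by rw [EfronStein.esComp_esComp, if_neg hST, zero_add]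
    rw [hsplit]
    exact hdefect S T
  · have hsplit : (fun x => esComp μ S (esComp μ S f) x - esComp μ S f x)
        = EfronStein.esDefect μ S S f :=
      funext fun x => by rw [EfronStein.esComp_esComp, if_pos rfl, add_sub_cancel_left]
    rw [hsplit]
    exact hdefect S S
end

section
/- Decorrelation of the noise operator: for X a d-partite (q,γ)-product, r ∈ ℝ^d, and any permutation π of [d], ‖T_r f − T^{π(1)}_{r_{π(1)}} ⋯ T^{π(d)}_{r_{π(d)}} f‖_q ≤ c_{d,r} γ ‖f‖_q with c_{d,r} = d³ ∑_{S⊆[d]} |r_S ∏_{i∉S}(1−r_i)|. -/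
open Finset BigOperators

/-- The vector-valued noise operator
`T_r f = ∑_{S⊆[d]} (∏_{i∈S} r_i)(∏_{i∉S}(1−r_i)) E_S f`. -/
noncomputable def noiseT {d : ℕ} {Ω : Type} [Fintype Ω] [DecidableEq Ω]
    (μ : (Fin d → Ω) → ℝ) (r : Fin d → ℝ) (f : (Fin d → Ω) → ℝ) :
    (Fin d → Ω) → ℝ :=
  fun x => ∑ S ∈ (univ : Finset (Fin d)).powerset,
    (∏ i ∈ S, r i) * (∏ i ∈ Sᶜ, (1 - r i)) * projE μ S f x

/-- Single-coordinate noise operator `T^i_c = c·I + (1−c)·E_{[d]\{i}}`. -/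
noncomputable def coordT {d : ℕ} {Ω : Type} [Fintype Ω] [DecidableEq Ω]
    (μ : (Fin d → Ω) → ℝ) (i : Fin d) (c : ℝ) (f : (Fin d → Ω) → ℝ) :
    (Fin d → Ω) → ℝ :=
  fun x => c * f x + (1 - c) * projE μ (univ.erase i) f x

/-- The composition `T^{π(1)}_{r_{π(1)}} ⋯ T^{π(d)}_{r_{π(d)}} f` of the
single-coordinate noise operators in the order prescribed by `π`. -/
noncomputable def seqT {d : ℕ} {Ω : Type} [Fintype Ω] [DecidableEq Ω]
    (μ : (Fin d → Ω) → ℝ) (r : Fin d → ℝ) (π : Equiv.Perm (Fin d))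
    (f : (Fin d → Ω) → ℝ) : (Fin d → Ω) → ℝ :=
  (List.ofFn fun k : Fin d => π k).foldr (fun i g => coordT μ i (r i) g) f

/-!
Expanding the product of the single-coordinate operators gives
`T^{π(1)}_{r_{π(1)}} ⋯ T^{π(d)}_{r_{π(d)}} = ∑_S r_S ∏_{i∉S}(1-r_i) ∏_{i∉S} E_{[d]∖{i}}`, the last
product taken in the order of `π`; so it suffices to bound `‖E_S f - ∏_{i∉S} E_{[d]∖{i}} f‖_q` by
`d³ γ ‖f‖_q` for each `S`. Peeling off one factor at a time reduces this to
`‖E_{T∖{i}} f - E_{[d]∖{i}} E_T f‖_q ≤ 2(d-1) γ ‖f‖_q`. The function `g = E_T f` depends only on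
the coordinates in `T∖{i}` and `i`, and one passes from `T∖{i}` to `[d]∖{i}` adding one coordinate
`j` at a time: `E_R g - E_{R∪{j}} g = E_{R∪{j}} (E_R g - g)` is, on each link of `R`, the walk from
colour `i` to colour `j` applied to a mean-zero function of colour `i`, so the `(q,γ)`-product
hypothesis bounds it by `2γ‖g‖_q`.
-/

section LpNorm

variable {α : Type} [Fintype α] {μ : α → ℝ} {q : ℝ}

lemma pnorm_nonneg (hμ : ∀ x, 0 ≤ μ x) (f : α → ℝ) : 0 ≤ pnorm μ q f :=
  Real.rpow_nonneg
    (sum_nonneg fun x _ => mul_nonneg (hμ x) (Real.rpow_nonneg (abs_nonneg _) _)) _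

lemma pnorm_rpow (hμ : ∀ x, 0 ≤ μ x) (hq : q ≠ 0) (f : α → ℝ) :
    pnorm μ q f ^ q = ∑ x, μ x * |f x| ^ q := by
  rw [pnorm, ← Real.rpow_mul (sum_nonneg fun x _ =>
    mul_nonneg (hμ x) (Real.rpow_nonneg (abs_nonneg _) _)), one_div_mul_cancel hq, Real.rpow_one]

lemma sum_mul_congr_ae {f g : α → ℝ} (h : ∀ x, μ x ≠ 0 → f x = g x) :
    ∑ x, μ x * f x = ∑ x, μ x * g x := by
  refine sum_congr rfl fun x _ => ?_
  rcases eq_or_ne (μ x) 0 with h0 | h0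
  · simp [h0]
  · rw [h x h0]

lemma pnorm_congr_ae {f g : α → ℝ} (h : ∀ x, μ x ≠ 0 → f x = g x) :
    pnorm μ q f = pnorm μ q g := by
  unfold pnorm
  rw [sum_mul_congr_ae fun x hx => by rw [h x hx]]

lemma pnorm_eq_zero_of_ae (hq : q ≠ 0) {f : α → ℝ} (h : ∀ x, μ x ≠ 0 → f x = 0) :
    pnorm μ q f = 0 := by
  rw [pnorm_congr_ae h, pnorm]
  simp [Real.zero_rpow hq, hq]

lemma pnorm_neg (f : α → ℝ) : pnorm μ q (fun x => -f x) = pnorm μ q f := by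
  simp only [pnorm, abs_neg]

lemma pnorm_const_mul (hμ : ∀ x, 0 ≤ μ x) (hq : 0 < q) (c : ℝ) (f : α → ℝ) :
    pnorm μ q (fun x => c * f x) = |c| * pnorm μ q f := by
  rw [← Real.rpow_left_inj (pnorm_nonneg hμ _) (mul_nonneg (abs_nonneg c) (pnorm_nonneg hμ f))
    hq.ne', Real.mul_rpow (abs_nonneg c) (pnorm_nonneg hμ f), pnorm_rpow hμ hq.ne',
    pnorm_rpow hμ hq.ne', mul_sum]
  refine sum_congr rfl fun x _ => ?_
  rw [abs_mul, Real.mul_rpow (abs_nonneg c) (abs_nonneg _)]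
  ring

lemma pnorm_add_le (hμ : ∀ x, 0 ≤ μ x) (hq : 1 ≤ q) (f g : α → ℝ) :
    pnorm μ q (fun x => f x + g x) ≤ pnorm μ q f + pnorm μ q g := by
  have habsorb : ∀ h : α → ℝ, pnorm μ q h = (∑ x, |μ x ^ (1 / q) * h x| ^ q) ^ (1 / q) := by
    intro h
    unfold pnorm
    congr 1
    refine sum_congr rfl fun x _ => ?_
    rw [abs_mul, abs_of_nonneg (Real.rpow_nonneg (hμ x) _),
      Real.mul_rpow (Real.rpow_nonneg (hμ x) _) (abs_nonneg _), ← Real.rpow_mul (hμ x),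
      one_div_mul_cancel (by linarith), Real.rpow_one]
  simpa only [habsorb, mul_add] using Real.Lp_add_le univ
    (fun x => μ x ^ (1 / q) * f x) (fun x => μ x ^ (1 / q) * g x) hq

lemma pnorm_sub_le (hμ : ∀ x, 0 ≤ μ x) (hq : 1 ≤ q) (f g : α → ℝ) :
    pnorm μ q (fun x => f x - g x) ≤ pnorm μ q f + pnorm μ q g := by
  simpa only [← sub_eq_add_neg, pnorm_neg] using pnorm_add_le hμ hq f (fun x => -g x)

lemma pnorm_sub_le_sub_add_sub (hμ : ∀ x, 0 ≤ μ x) (hq : 1 ≤ q) (f g h : α → ℝ) :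
    pnorm μ q (fun x => f x - h x) ≤
      pnorm μ q (fun x => f x - g x) + pnorm μ q (fun x => g x - h x) := by
  simpa only [sub_add_sub_cancel] using
    pnorm_add_le hμ hq (fun x => f x - g x) (fun x => g x - h x)

lemma pnorm_sum_le {ι : Type} (hμ : ∀ x, 0 ≤ μ x) (hq : 1 ≤ q) (s : Finset ι)
    (F : ι → α → ℝ) : pnorm μ q (fun x => ∑ i ∈ s, F i x) ≤ ∑ i ∈ s, pnorm μ q (F i) := by
  classical
  induction s using Finset.induction_on with
  | empty => simp [pnorm_eq_zero_of_ae (show q ≠ 0 by linarith)]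
  | insert a s ha ih =>
    simp only [sum_insert ha]
    exact (pnorm_add_le hμ hq _ _).trans (by gcongr)

lemma pnorm_sum_mul_le {ι : Type} (hμ : ∀ x, 0 ≤ μ x) (hq : 1 ≤ q) (s : Finset ι) (c : ι → ℝ)
    (F : ι → α → ℝ) :
    pnorm μ q (fun x => ∑ i ∈ s, c i * F i x) ≤ ∑ i ∈ s, |c i| * pnorm μ q (F i) := by
  refine (pnorm_sum_le hμ hq s _).trans (le_of_eq (sum_congr rfl fun i _ => ?_))
  exact pnorm_const_mul hμ (by linarith) (c i) (F i)

end LpNorm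

section CondExp

lemma fiber_congr {d : ℕ} {Ω : Type} {R : Finset (Fin d)} {z z' : Fin d → Ω}
    (h : ∀ i ∈ R, z i = z' i) (y : Fin d → Ω) :
    (∀ i ∈ R, y i = z i) ↔ ∀ i ∈ R, y i = z' i :=
  forall₂_congr fun i hi => by rw [h i hi]

variable {d : ℕ} {Ω : Type} [Fintype Ω] [DecidableEq Ω] {μ : (Fin d → Ω) → ℝ}
  {R T : Finset (Fin d)} {x y z : Fin d → Ω}

noncomputable def fiberMass (μ : (Fin d → Ω) → ℝ) (R : Finset (Fin d)) (z : Fin d → Ω) : ℝ :=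
  ∑ y, if ∀ i ∈ R, y i = z i then μ y else 0

lemma condMeasure_apply :
    condMeasure μ R z y = (if ∀ i ∈ R, y i = z i then μ y else 0) / fiberMass μ R z := rfl

lemma fiberMass_nonneg (hμ : ∀ x, 0 ≤ μ x) : 0 ≤ fiberMass μ R z :=
  sum_nonneg fun y _ => by split_ifs <;> simp [hμ y]

lemma le_fiberMass (hμ : ∀ x, 0 ≤ μ x) : μ z ≤ fiberMass μ R z := by
  have hz : μ z = if ∀ i ∈ R, z i = z i then μ z else 0 := by simp
  rw [hz]
  exact single_le_sum (f := fun y => if ∀ i ∈ R, y i = z i then μ y else 0)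
    (fun y _ => by split_ifs <;> simp [hμ y]) (mem_univ z)

lemma condMeasure_nonneg (hμ : ∀ x, 0 ≤ μ x) : 0 ≤ condMeasure μ R z y :=
  div_nonneg (by split_ifs <;> simp [hμ y]) (fiberMass_nonneg hμ)

lemma fiberMass_congr {z' : Fin d → Ω} (h : ∀ i ∈ R, z i = z' i) :
    fiberMass μ R z = fiberMass μ R z' := by
  simp only [fiberMass, fiber_congr h]

lemma condMeasure_congr {z' : Fin d → Ω} (h : ∀ i ∈ R, z i = z' i) :
    condMeasure μ R z = condMeasure μ R z' := by
  funext y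
  simp only [condMeasure, fiber_congr h]

lemma sum_condMeasure (h : fiberMass μ R z ≠ 0) : ∑ y, condMeasure μ R z y = 1 := by
  simp only [condMeasure_apply, ← sum_div]
  exact div_self h

lemma fiber_of_condMeasure_ne_zero (h : condMeasure μ R z y ≠ 0) : ∀ i ∈ R, y i = z i := by
  by_contra hy
  simp [condMeasure_apply, hy] at h

lemma ne_zero_of_condMeasure_ne_zero (h : condMeasure μ R z y ≠ 0) : μ y ≠ 0 := by
  rintro hy
  simp [condMeasure_apply, hy] at h

lemma mul_condMeasure_comm : μ x * condMeasure μ T x y = μ y * condMeasure μ T y x := by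
  by_cases hxy : ∀ i ∈ T, y i = x i
  · have hyx : ∀ i ∈ T, x i = y i := fun i hi => (hxy i hi).symm
    rw [condMeasure_apply, condMeasure_apply, if_pos hxy, if_pos hyx,
      fiberMass_congr hyx]
    ring
  · have hyx : ¬∀ i ∈ T, x i = y i := fun h => hxy fun i hi => (h i hi).symm
    simp [condMeasure_apply, hxy, hyx]

lemma mul_sum_condMeasure (hμ : ∀ x, 0 ≤ μ x) : μ y * ∑ x, condMeasure μ T y x = μ y := by
  rcases eq_or_ne (fiberMass μ T y) 0 with h | h
  · have : μ y = 0 := le_antisymm (h ▸ le_fiberMass hμ) (hμ y)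
    simp [this]
  · rw [sum_condMeasure h, mul_one]

lemma sum_mul_condMeasure (hμ : ∀ x, 0 ≤ μ x) : ∑ x, μ x * condMeasure μ T x y = μ y := by
  simp only [mul_condMeasure_comm (x := _) (y := y)]
  rw [← mul_sum, mul_sum_condMeasure hμ]

lemma condMeasure_condMeasure (hμ : ∀ x, 0 ≤ μ x) (hx : ∀ i ∈ R, x i = z i) :
    condMeasure (condMeasure μ R z) T x = condMeasure μ (T ∪ R) x := by
  have hfiber : ∀ y : Fin d → Ω, ((∀ i ∈ T, y i = x i) ∧ ∀ i ∈ R, y i = z i) ↔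
      ∀ i ∈ T ∪ R, y i = x i := by
    intro y
    simp only [mem_union, or_imp, forall_and, fiber_congr (fun i hi => (hx i hi).symm)]
  have hnum : ∀ y : Fin d → Ω, (if ∀ i ∈ T, y i = x i then condMeasure μ R z y else 0) =
      (if ∀ i ∈ T ∪ R, y i = x i then μ y else 0) / fiberMass μ R z := by
    intro y
    simp only [condMeasure_apply, ← hfiber, ite_and]
    split_ifs <;> simp
  have hsum : fiberMass (condMeasure μ R z) T x = fiberMass μ (T ∪ R) x / fiberMass μ R z := by
    simp only [hnum, ← sum_div, fiberMass]
  funext y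
  rw [condMeasure_apply, hnum, hsum, condMeasure_apply]
  rcases eq_or_ne (fiberMass μ R z) 0 with h | h
  · have hzero : (if ∀ i ∈ T ∪ R, y i = x i then μ y else 0) = 0 := by
      split_ifs with hy
      · have := (sum_eq_zero_iff_of_nonneg fun y _ => (by split_ifs <;> simp [hμ y])).1 h y
          (mem_univ y)
        rwa [if_pos ((hfiber y).2 hy).2] at this
      · rfl
    rw [h, div_zero, zero_div, hzero, zero_div]
  · exact div_div_div_cancel_right₀ h _ _

lemma projE_eq_sum (f : (Fin d → Ω) → ℝ) : projE μ T f x = ∑ y, condMeasure μ T x y * f y := by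
  rw [projE, sum_div]
  refine sum_congr rfl fun y _ => ?_
  rw [condMeasure_apply, fiberMass]
  split_ifs <;> ring

lemma projE_sub (f g : (Fin d → Ω) → ℝ) :
    projE μ T (fun y => f y - g y) x = projE μ T f x - projE μ T g x := by
  simp only [projE_eq_sum, mul_sub, sum_sub_distrib]

lemma projE_const_mul (c : ℝ) (f : (Fin d → Ω) → ℝ) :
    projE μ T (fun y => c * f y) x = c * projE μ T f x := by
  simp only [projE_eq_sum, mul_sum, mul_left_comm]

lemma projE_sum {ι : Type} (s : Finset ι) (F : ι → (Fin d → Ω) → ℝ) :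
    projE μ T (fun y => ∑ i ∈ s, F i y) x = ∑ i ∈ s, projE μ T (F i) x := by
  simp only [projE_eq_sum, mul_sum]
  exact sum_comm

lemma projE_congr_ae {f g : (Fin d → Ω) → ℝ} (h : ∀ y, μ y ≠ 0 → f y = g y) :
    projE μ T f x = projE μ T g x := by
  simp only [projE_eq_sum]
  exact sum_mul_congr_ae fun y hy => h y (ne_zero_of_condMeasure_ne_zero hy)

lemma dependsOn_projE (f : (Fin d → Ω) → ℝ) : DependsOn (projE μ T f) T := by
  intro x x' h
  simp only [projE_eq_sum, condMeasure_congr h]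

lemma projE_of_dependsOn (hμ : ∀ x, 0 ≤ μ x) {f : (Fin d → Ω) → ℝ} (hf : DependsOn f T)
    (hx : μ x ≠ 0) : projE μ T f x = f x := by
  have hmass : fiberMass μ T x ≠ 0 := ((hμ x).lt_of_ne hx.symm |>.trans_le (le_fiberMass hμ)).ne'
  calc projE μ T f x = ∑ y, condMeasure μ T x y * f x := by
        rw [projE_eq_sum]
        exact sum_mul_congr_ae fun y hy => hf (fiber_of_condMeasure_ne_zero hy)
    _ = f x := by rw [← sum_mul, sum_condMeasure hmass, one_mul]

lemma sum_mul_projE (hμ : ∀ x, 0 ≤ μ x) (f : (Fin d → Ω) → ℝ) :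
    ∑ x, μ x * projE μ T f x = ∑ x, μ x * f x := by
  simp only [projE_eq_sum, mul_sum, ← mul_assoc]
  rw [sum_comm]
  simp only [← sum_mul, sum_mul_condMeasure hμ]

lemma projE_condMeasure (hμ : ∀ x, 0 ≤ μ x) (hx : ∀ i ∈ R, x i = z i)
    (f : (Fin d → Ω) → ℝ) : projE (condMeasure μ R z) T f x = projE μ (T ∪ R) f x := by
  rw [projE_eq_sum, projE_eq_sum, condMeasure_condMeasure hμ hx]

lemma projE_projE_of_subset (hμ : ∀ x, 0 ≤ μ x) {A B : Finset (Fin d)} (hAB : A ⊆ B)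
    (f : (Fin d → Ω) → ℝ) : projE μ A (projE μ B f) x = projE μ A f x := by
  rw [projE_eq_sum, projE_eq_sum]
  calc ∑ y, condMeasure μ A x y * projE μ B f y
      = ∑ y, condMeasure μ A x y * projE (condMeasure μ A x) B f y :=
        sum_mul_congr_ae fun y hy => by
          rw [projE_condMeasure hμ (fiber_of_condMeasure_ne_zero hy), union_eq_left.2 hAB]
    _ = ∑ y, condMeasure μ A x y * f y := sum_mul_projE (fun _ => condMeasure_nonneg hμ) f

lemma abs_projE_rpow_le (hμ : ∀ x, 0 ≤ μ x) {q : ℝ} (hq : 1 ≤ q) (f : (Fin d → Ω) → ℝ) :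
    |projE μ T f x| ^ q ≤ projE μ T (fun y => |f y| ^ q) x := by
  rw [projE_eq_sum, projE_eq_sum]
  rcases eq_or_ne (fiberMass μ T x) 0 with h | h
  · simp [condMeasure_apply, h, Real.zero_rpow (by linarith : q ≠ 0)]
  calc |∑ y, condMeasure μ T x y * f y| ^ q ≤ (∑ y, condMeasure μ T x y * |f y|) ^ q := by
        refine Real.rpow_le_rpow (abs_nonneg _) ((abs_sum_le_sum_abs _ _).trans_eq ?_)
          (by linarith)
        simp only [abs_mul, abs_of_nonneg (condMeasure_nonneg hμ)]
    _ ≤ ∑ y, condMeasure μ T x y * |f y| ^ q :=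
        Real.rpow_arith_mean_le_arith_mean_rpow univ _ _ (fun y _ => condMeasure_nonneg hμ)
          (sum_condMeasure h) (fun y _ => abs_nonneg _) hq

lemma pnorm_projE_le (hμ : ∀ x, 0 ≤ μ x) {q : ℝ} (hq : 1 ≤ q) (f : (Fin d → Ω) → ℝ) :
    pnorm μ q (projE μ T f) ≤ pnorm μ q f := by
  refine Real.rpow_le_rpow (sum_nonneg fun x _ =>
    mul_nonneg (hμ x) (Real.rpow_nonneg (abs_nonneg _) _)) ?_ (by positivity)
  calc ∑ x, μ x * |projE μ T f x| ^ q
      ≤ ∑ x, μ x * projE μ T (fun y => |f y| ^ q) x :=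
        sum_le_sum fun x _ => mul_le_mul_of_nonneg_left (abs_projE_rpow_le hμ hq f) (hμ x)
    _ = ∑ x, μ x * |f x| ^ q := sum_mul_projE hμ _

end CondExp

lemma card_add_two_le {d : ℕ} {R : Finset (Fin d)} {i j : Fin d} (hi : i ∉ R) (hj : j ∉ R)
    (hij : i ≠ j) : R.card + 2 ≤ d := by
  have := card_le_univ (insert i (insert j R))
  rw [card_insert_of_notMem (by simp [hij, hi]), card_insert_of_notMem hj, Fintype.card_fin]
    at this
  omega

section Product

variable {d : ℕ} {Ω : Type} [Fintype Ω] [DecidableEq Ω] {μ : (Fin d → Ω) → ℝ} {q γ : ℝ}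

lemma pnorm_rpow_eq_sum_condMeasure (hμ : ∀ x, 0 ≤ μ x) (hq : q ≠ 0) (R : Finset (Fin d))
    (F : (Fin d → Ω) → ℝ) :
    pnorm μ q F ^ q = ∑ z, μ z * pnorm (condMeasure μ R z) q F ^ q := by
  rw [pnorm_rpow hμ hq, ← sum_mul_projE hμ (T := R)]
  simp only [pnorm_rpow (fun _ => condMeasure_nonneg hμ) hq, projE_eq_sum]

lemma pnorm_le_of_forall_condMeasure (hμ : ∀ x, 0 ≤ μ x) (hq : 0 < q) {c : ℝ} (hc : 0 ≤ c)
    (R : Finset (Fin d)) {F G : (Fin d → Ω) → ℝ}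
    (h : ∀ z, pnorm (condMeasure μ R z) q F ≤ c * pnorm (condMeasure μ R z) q G) :
    pnorm μ q F ≤ c * pnorm μ q G := by
  have hν : ∀ z y, 0 ≤ condMeasure μ R z y := fun _ _ => condMeasure_nonneg hμ
  rw [← Real.rpow_le_rpow_iff (pnorm_nonneg hμ F) (mul_nonneg hc (pnorm_nonneg hμ G)) hq,
    Real.mul_rpow hc (pnorm_nonneg hμ G), pnorm_rpow_eq_sum_condMeasure hμ hq.ne' R,
    pnorm_rpow_eq_sum_condMeasure hμ hq.ne' R, mul_sum]
  refine sum_le_sum fun z _ => ?_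
  rw [mul_left_comm, ← Real.mul_rpow hc (pnorm_nonneg (hν z) G)]
  exact mul_le_mul_of_nonneg_left (Real.rpow_le_rpow (pnorm_nonneg (hν z) F) (h z) hq.le) (hμ z)

lemma pnorm_projE_insert_le (hX : IsQGammaProduct μ q γ) (hμ : ∀ x, 0 ≤ μ x) (hq : 0 < q)
    (hγ : 0 ≤ γ) {R : Finset (Fin d)} {i j : Fin d} (hi : i ∉ R)
    (hj : j ∉ R) (hij : i ≠ j) {δ : (Fin d → Ω) → ℝ} (hδ : DependsOn δ ↑(insert i R))
    (hδ0 : ∀ z, projE μ R δ z = 0) :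
    pnorm μ q (projE μ (insert j R) δ) ≤ γ * pnorm μ q δ := by
  refine pnorm_le_of_forall_condMeasure hμ hq hγ R fun z => ?_
  set ν := condMeasure μ R z
  -- on the link of `z`, `δ` agrees with `g`, a function of the coordinate `i` alone
  set g : (Fin d → Ω) → ℝ := fun y => δ (Function.update z i (y i))
  have hg : ∀ x y : Fin d → Ω, x i = y i → g x = g y := fun x y h => by simp only [g, h]
  have hgδ : ∀ y, ν y ≠ 0 → g y = δ y := fun y hy => hδ fun t ht => by
    rcases mem_insert.1 ht with rfl | htR
    · simp
    · rw [Function.update_of_ne (by rintro rfl; exact hi htR)]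
      exact (fiber_of_condMeasure_ne_zero hy t htR).symm
  have hmean : ∑ y, ν y * g y = 0 := by
    rw [← hδ0 z, projE_eq_sum]
    exact sum_mul_congr_ae hgδ
  calc pnorm ν q (projE μ (insert j R) δ)
      = pnorm ν q (fun x => projE ν {j} g x - ∑ y, ν y * g y) := pnorm_congr_ae fun x hx => by
        rw [hmean, sub_zero, projE_congr_ae hgδ,
          projE_condMeasure hμ (fiber_of_condMeasure_ne_zero hx), ← insert_eq]
    _ ≤ γ * pnorm ν q g := hX R z (card_add_two_le hi hj hij) i j hi hj hij g hg
    _ = γ * pnorm ν q δ := by rw [pnorm_congr_ae hgδ]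

lemma pnorm_projE_sub_projE_insert_le (hX : IsQGammaProduct μ q γ) (hμ : ∀ x, 0 ≤ μ x)
    (hq : 1 ≤ q) (hγ : 0 ≤ γ) {R : Finset (Fin d)} {b j : Fin d} (hb : b ∉ R) (hj : j ∉ R)
    (hbj : b ≠ j) {δ : (Fin d → Ω) → ℝ} (hδ : DependsOn δ ↑(insert b R)) :
    pnorm μ q (fun x => projE μ R δ x - projE μ (insert j R) δ x) ≤ 2 * γ * pnorm μ q δ := by
  set c : (Fin d → Ω) → ℝ := fun y => projE μ R δ y - δ y
  have hc : DependsOn c ↑(insert b R) := fun x y h => by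
    simp only [c, hδ h, dependsOn_projE δ fun i hi => h i (mem_insert_of_mem hi)]
  have hc0 : ∀ z, projE μ R c z = 0 := fun z => by
    rw [projE_sub, projE_projE_of_subset hμ subset_rfl, sub_self]
  have hcδ : pnorm μ q c ≤ 2 * pnorm μ q δ := by
    linarith [pnorm_sub_le hμ hq (projE μ R δ) δ, pnorm_projE_le hμ hq (T := R) δ]
  calc pnorm μ q (fun x => projE μ R δ x - projE μ (insert j R) δ x)
      = pnorm μ q (projE μ (insert j R) c) := pnorm_congr_ae fun x hx => by
        rw [projE_sub, projE_of_dependsOn hμ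
          ((dependsOn_projE δ).mono (coe_subset.2 (subset_insert j R))) hx]
    _ ≤ γ * pnorm μ q c := pnorm_projE_insert_le hX hμ (by linarith) hγ hb hj hbj hc hc0
    _ ≤ 2 * γ * pnorm μ q δ := by nlinarith

lemma pnorm_projE_sub_projE_union_le (hX : IsQGammaProduct μ q γ) (hμ : ∀ x, 0 ≤ μ x)
    (hq : 1 ≤ q) (hγ : 0 ≤ γ) {A : Finset (Fin d)} {b : Fin d} (hbA : b ∉ A)
    {δ : (Fin d → Ω) → ℝ} (hδ : DependsOn δ ↑(insert b A)) {U : Finset (Fin d)} (hbU : b ∉ U)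
    (hAU : Disjoint A U) :
    pnorm μ q (fun x => projE μ A δ x - projE μ (A ∪ U) δ x) ≤ 2 * U.card * γ * pnorm μ q δ := by
  induction U using Finset.induction_on with
  | empty => simp [pnorm_eq_zero_of_ae (by linarith : q ≠ 0)]
  | insert w U hwU ih =>
    have hbU' : b ∉ U := fun h => hbU (mem_insert_of_mem h)
    have hwA : w ∉ A := fun h => disjoint_left.1 hAU h (mem_insert_self w U)
    have hbw : b ≠ w := fun h => hbU (h ▸ mem_insert_self w U)
    have hδ' : DependsOn δ ↑(insert b (A ∪ U)) :=
      hδ.mono (coe_subset.2 (insert_subset_insert b subset_union_left))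
    rw [union_insert, card_insert_of_notMem hwU]
    calc _ ≤ pnorm μ q (fun x => projE μ A δ x - projE μ (A ∪ U) δ x) +
          pnorm μ q (fun x => projE μ (A ∪ U) δ x - projE μ (insert w (A ∪ U)) δ x) :=
          pnorm_sub_le_sub_add_sub hμ hq _ _ _
      _ ≤ 2 * U.card * γ * pnorm μ q δ + 2 * γ * pnorm μ q δ :=
          add_le_add (ih hbU' (hAU.mono_right (subset_insert w U)))
            (pnorm_projE_sub_projE_insert_le hX hμ hq hγ (by simp [hbA, hbU'])
              (by simp [hwA, hwU]) hbw hδ')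
      _ = 2 * ↑(U.card + 1) * γ * pnorm μ q δ := by push_cast; ring

lemma pnorm_projE_erase_sub_projE_erase_projE_le (hX : IsQGammaProduct μ q γ)
    (hμ : ∀ x, 0 ≤ μ x) (hq : 1 ≤ q) (hγ : 0 ≤ γ) (T : Finset (Fin d)) (i : Fin d)
    (f : (Fin d → Ω) → ℝ) :
    pnorm μ q (fun x => projE μ (T.erase i) f x - projE μ (univ.erase i) (projE μ T f) x) ≤
      2 * ((d : ℝ) - 1) * γ * pnorm μ q f := by
  have hA : T.erase i ⊆ univ.erase i := erase_subset_erase i (subset_univ T)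
  have hcard : ((univ.erase i \ T.erase i).card : ℝ) ≤ d - 1 := by
    have := card_le_card (sdiff_subset : univ.erase i \ T.erase i ⊆ univ.erase i)
    rw [card_erase_of_mem (mem_univ i), card_univ, Fintype.card_fin] at this
    have := i.pos
    rw [le_sub_iff_add_le]
    exact_mod_cast (by omega : _ + 1 ≤ d)
  calc pnorm μ q (fun x => projE μ (T.erase i) f x - projE μ (univ.erase i) (projE μ T f) x)
      = pnorm μ q (fun x => projE μ (T.erase i) (projE μ T f) x -
          projE μ (T.erase i ∪ (univ.erase i \ T.erase i)) (projE μ T f) x) := by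
        simp only [union_sdiff_of_subset hA, projE_projE_of_subset hμ (erase_subset i T)]
    _ ≤ 2 * (univ.erase i \ T.erase i).card * γ * pnorm μ q (projE μ T f) :=
        pnorm_projE_sub_projE_union_le hX hμ hq hγ (notMem_erase i T)
          ((dependsOn_projE f).mono (coe_subset.2 (insert_erase_subset i T)))
          (fun h => notMem_erase i univ (mem_sdiff.1 h).1) disjoint_sdiff
    _ ≤ 2 * ((d : ℝ) - 1) * γ * pnorm μ q f := by
        have := pnorm_projE_le hμ hq (T := T) f
        have := pnorm_nonneg hμ (q := q) (projE μ T f)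
        have : 0 ≤ 2 * ((d : ℝ) - 1) * γ :=
          mul_nonneg (by linarith [(univ.erase i \ T.erase i).card.cast_nonneg (α := ℝ)]) hγ
        gcongr

end Product

section Noise

variable {d : ℕ} {Ω : Type} [Fintype Ω] [DecidableEq Ω] {μ : (Fin d → Ω) → ℝ} {q γ : ℝ}

/-- The paper's `∏_{i ∈ l} E_{[d]∖{i}}`, composed in the order of the list `l`. -/
noncomputable def compProjEErase (μ : (Fin d → Ω) → ℝ) (l : List (Fin d))
    (f : (Fin d → Ω) → ℝ) : (Fin d → Ω) → ℝ :=
  l.foldr (fun i g => projE μ (univ.erase i) g) f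

lemma compProjEErase_nil (μ : (Fin d → Ω) → ℝ) (f : (Fin d → Ω) → ℝ) :
    compProjEErase μ [] f = f := rfl

lemma compProjEErase_cons (μ : (Fin d → Ω) → ℝ) (i : Fin d) (l : List (Fin d))
    (f : (Fin d → Ω) → ℝ) :
    compProjEErase μ (i :: l) f = projE μ (univ.erase i) (compProjEErase μ l f) := rfl

lemma pnorm_projE_sub_compProjEErase_le (hX : IsQGammaProduct μ q γ) (hμ : ∀ x, 0 ≤ μ x)
    (hq : 1 ≤ q) (hγ : 0 ≤ γ) (f : (Fin d → Ω) → ℝ) (l : List (Fin d)) :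
    pnorm μ q (fun x => projE μ l.toFinsetᶜ f x - compProjEErase μ l f x) ≤
      l.length * (2 * ((d : ℝ) - 1) * γ * pnorm μ q f) := by
  induction l with
  | nil =>
    simp only [List.toFinset_nil, compl_empty, compProjEErase_nil, List.length_nil,
      Nat.cast_zero, zero_mul]
    refine (pnorm_eq_zero_of_ae (by linarith) fun x hx => ?_).le
    rw [projE_of_dependsOn hμ (by simpa using dependsOn_univ f) hx, sub_self]
  | cons i l ih =>
    rw [List.toFinset_cons, compl_insert, List.length_cons]
    calc _ ≤ pnorm μ q (fun x => projE μ (l.toFinsetᶜ.erase i) f x -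
            projE μ (univ.erase i) (projE μ l.toFinsetᶜ f) x) +
          pnorm μ q (fun x => projE μ (univ.erase i) (projE μ l.toFinsetᶜ f) x -
            compProjEErase μ (i :: l) f x) :=
          pnorm_sub_le_sub_add_sub hμ hq _ _ _
      _ ≤ 2 * ((d : ℝ) - 1) * γ * pnorm μ q f +
          l.length * (2 * ((d : ℝ) - 1) * γ * pnorm μ q f) := by
          refine add_le_add (pnorm_projE_erase_sub_projE_erase_projE_le hX hμ hq hγ _ i f) ?_
          simp only [compProjEErase_cons, ← projE_sub]
          exact (pnorm_projE_le hμ hq _).trans ih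
      _ = ↑(l.length + 1) * (2 * ((d : ℝ) - 1) * γ * pnorm μ q f) := by push_cast; ring

lemma foldr_coordT_eq (μ : (Fin d → Ω) → ℝ) (r : Fin d → ℝ) (f : (Fin d → Ω) → ℝ)
    {l : List (Fin d)} (hl : l.Nodup) :
    l.foldr (fun i g => coordT μ i (r i) g) f = fun x =>
      ∑ S ∈ l.toFinset.powerset, (∏ i ∈ S, r i) * (∏ i ∈ l.toFinset \ S, (1 - r i)) *
        compProjEErase μ (l.filter (· ∉ S)) f x := by
  induction l with
  | nil => funext x; simp [compProjEErase_nil]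
  | cons i l ih =>
    obtain ⟨hil, hl⟩ := List.nodup_cons.1 hl
    have hiL : i ∉ l.toFinset := by simpa using hil
    funext x
    rw [List.foldr_cons, ih hl]
    simp only [coordT, projE_sum, projE_const_mul, List.toFinset_cons, sum_powerset_insert hiL,
      mul_sum, ← sum_add_distrib]
    refine sum_congr rfl fun S hS => ?_
    have hiS : i ∉ S := fun h => hiL (mem_powerset.1 hS h)
    have hfilter : (i :: l).filter (· ∉ insert i S) = l.filter (· ∉ S) := by
      rw [List.filter_cons_of_neg (by simp)]
      exact List.filter_congr fun a ha => by simp [show a ≠ i from fun h => hil (h ▸ ha)]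
    rw [insert_sdiff_of_notMem _ hiS, insert_sdiff_insert, sdiff_insert_of_notMem hiL, hfilter,
      List.filter_cons_of_pos (by simpa using hiS), compProjEErase_cons, prod_insert hiS,
      prod_insert (fun h => hiL (mem_sdiff.1 h).1)]
    ring

lemma noiseT_sub_seqT (μ : (Fin d → Ω) → ℝ) (r : Fin d → ℝ) (π : Equiv.Perm (Fin d))
    (f : (Fin d → Ω) → ℝ) (x : Fin d → Ω) :
    noiseT μ r f x - seqT μ r π f x = ∑ S ∈ (univ : Finset (Fin d)).powerset,
      (∏ i ∈ S, r i) * (∏ i ∈ Sᶜ, (1 - r i)) *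
        (projE μ S f x - compProjEErase μ ((List.ofFn fun k => π k).filter (· ∉ S)) f x) := by
  have hl : (List.ofFn fun k => π k).toFinset = univ :=
    eq_univ_of_forall fun a => List.mem_toFinset.2 (List.mem_ofFn.2 (π.surjective a))
  simp only [noiseT, seqT, foldr_coordT_eq μ r f (List.nodup_ofFn.2 π.injective), hl,
    compl_eq_univ_sdiff, ← sum_sub_distrib, mul_sub]

lemma pnorm_projE_sub_compProjEErase_filter_le (hX : IsQGammaProduct μ q γ)
    (hμ : ∀ x, 0 ≤ μ x) (hq : 1 ≤ q) (hγ : 0 ≤ γ) (π : Equiv.Perm (Fin d))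
    (f : (Fin d → Ω) → ℝ) (S : Finset (Fin d)) :
    pnorm μ q (fun x => projE μ S f x -
        compProjEErase μ ((List.ofFn fun k => π k).filter (· ∉ S)) f x) ≤
      d ^ 3 * γ * pnorm μ q f := by
  set l := (List.ofFn fun k => π k).filter (· ∉ S)
  have hlS : l.toFinsetᶜ = S := by
    ext a
    simp [l, List.mem_ofFn.2 (π.surjective a)]
  have hlen : (l.length : ℝ) ≤ d := by
    exact_mod_cast (List.length_filter_le _ _).trans_eq List.length_ofFn
  have hconst : (l.length : ℝ) * (2 * ((d : ℝ) - 1)) ≤ d ^ 3 := by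
    rcases Nat.eq_zero_or_pos l.length with h | h
    · simp [h]
    · have : (1 : ℝ) ≤ d := by exact_mod_cast h.trans_le (by exact_mod_cast hlen)
      nlinarith [sq_nonneg ((d : ℝ) - 1)]
  have := mul_nonneg hγ (pnorm_nonneg hμ (q := q) f)
  calc _ = pnorm μ q (fun x => projE μ l.toFinsetᶜ f x - compProjEErase μ l f x) := by rw [hlS]
    _ ≤ l.length * (2 * ((d : ℝ) - 1) * γ * pnorm μ q f) :=
        pnorm_projE_sub_compProjEErase_le hX hμ hq hγ f l
    _ ≤ d ^ 3 * γ * pnorm μ q f := by nlinarith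

end Noise

theorem noise_decorrelation_general {d : ℕ} {Ω : Type} [Fintype Ω] [DecidableEq Ω]
    (μ : (Fin d → Ω) → ℝ) (hμ0 : ∀ x, 0 ≤ μ x)
    (q γ : ℝ) (hq : 1 < q) (hγ : 0 ≤ γ) (hX : IsQGammaProduct μ q γ)
    (r : Fin d → ℝ) (π : Equiv.Perm (Fin d)) (f : (Fin d → Ω) → ℝ) :
    pnorm μ q (fun x => noiseT μ r f x - seqT μ r π f x)
      ≤ ((d : ℝ) ^ 3 *
          ∑ S ∈ (univ : Finset (Fin d)).powerset,
            |(∏ i ∈ S, r i) * ∏ i ∈ Sᶜ, (1 - r i)|) * γ * pnorm μ q f := by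
  calc pnorm μ q (fun x => noiseT μ r f x - seqT μ r π f x)
      ≤ ∑ S ∈ (univ : Finset (Fin d)).powerset, |(∏ i ∈ S, r i) * ∏ i ∈ Sᶜ, (1 - r i)| *
          pnorm μ q (fun x => projE μ S f x -
            compProjEErase μ ((List.ofFn fun k => π k).filter (· ∉ S)) f x) := by
        simp only [noiseT_sub_seqT]
        exact pnorm_sum_mul_le hμ0 hq.le _ _ _
    _ ≤ ∑ S ∈ (univ : Finset (Fin d)).powerset, |(∏ i ∈ S, r i) * ∏ i ∈ Sᶜ, (1 - r i)| *
          (d ^ 3 * γ * pnorm μ q f) := by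
        gcongr with S
        exact pnorm_projE_sub_compProjEErase_filter_le hX hμ0 hq.le hγ π f S
    _ = _ := by rw [← sum_mul]; ring

/-- decorrelation of the noise operator on a `(q,γ)`-product:
`‖T_r f − T^{π(1)}_{r_{π(1)}} ⋯ T^{π(d)}_{r_{π(d)}} f‖_q ≤ c_{d,r} γ ‖f‖_q`
with `c_{d,r} = d³ ∑_{S⊆[d]} |r_S ∏_{i∉S}(1−r_i)|`. -/
theorem noise_decorrelation {d : ℕ} {Ω : Type} [Fintype Ω] [DecidableEq Ω]
    (μ : (Fin d → Ω) → ℝ) (hμ0 : ∀ x, 0 ≤ μ x) (hμ1 : ∑ x, μ x = 1)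
    (q γ : ℝ) (hq : 1 < q) (hγ : 0 ≤ γ) (hX : IsQGammaProduct μ q γ)
    (r : Fin d → ℝ) (π : Equiv.Perm (Fin d)) (f : (Fin d → Ω) → ℝ) :
    pnorm μ q (fun x => noiseT μ r f x - seqT μ r π f x)
      ≤ ((d : ℝ) ^ 3 *
          ∑ S ∈ (univ : Finset (Fin d)).powerset,
            |(∏ i ∈ S, r i) * ∏ i ∈ Sᶜ, (1 - r i)|) * γ * pnorm μ q f :=
  noise_decorrelation_general μ hμ0 q γ hq hγ hX r π f
end
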